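/- Let Ω be a metric space, X̄ ⊆ Ω a closed subset, r : Ω → X̄ a continuous retraction (r(x) = x for x ∈ X̄), O ⊆ Ω open, and let s : X̄ → E, σ : O → E be continuous maps into a metric space E with σ = s on X̄ ∩ O. Define O' = { u ∈ O : d_E( σ(u), s(r(u)) ) < dist(u, X̄ \ O) }. Then O' is open, X̄ ∩ O' = X̄ ∩ O, and for every sequence (uₙ) in O' converging to a point x ∈ X̄ \ O, one has σ(uₙ) → s(x); consequently the glued map s∨σ|_{O'} is continuous on X̄ ∪ O'. -/

import Mathlib

/-!
On `O'` the value `σ u` is within `dist(u, X̄ \ O)` of `s (r u)`, hence within `dist(u, x)` of it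
for every `x ∈ X̄ \ O`; on `X̄` the glued map equals `s ∘ r` exactly. So near a point
`x ∈ X̄ \ O` the glued map is squeezed onto the continuous map `s ∘ r`, which takes the value
`s x` at `x`. Elsewhere on `X̄ ∪ O'` the glued map agrees with `σ` on the open set `O'`.
-/

open scoped Classical

open Filter Topology

open Metric Set

section ShrunkenOpen

variable {Ω E : Type*} [PseudoMetricSpace Ω] [PseudoMetricSpace E]

theorem tendsto_nhdsWithin_of_dist_le_dist {f g : Ω → E} {S : Set Ω} {x : Ω}
    (hg : ContinuousAt g x) (hfg : ∀ u ∈ S, dist (f u) (g u) ≤ dist u x) :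
    Tendsto f (𝓝[S] x) (𝓝 (g x)) := by
  rw [tendsto_iff_dist_tendsto_zero]
  have hux : Tendsto (fun u => dist u x) (𝓝[S] x) (𝓝 0) :=
    tendsto_nhdsWithin_of_tendsto_nhds (tendsto_iff_dist_tendsto_zero.mp tendsto_id)
  have hgu : Tendsto (fun u => dist (g u) (g x)) (𝓝[S] x) (𝓝 0) :=
    tendsto_nhdsWithin_of_tendsto_nhds (tendsto_iff_dist_tendsto_zero.mp hg)
  refine squeeze_zero' (Eventually.of_forall fun _ => dist_nonneg) ?_ (by simpa using hux.add hgu)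
  filter_upwards [self_mem_nhdsWithin] with u hu
  calc dist (f u) (g x) ≤ dist (f u) (g u) + dist (g u) (g x) := dist_triangle _ _ _
    _ ≤ dist u x + dist (g u) (g x) := by gcongr; exact hfg u hu

def shrunkenOpen (K O : Set Ω) (σ g : Ω → E) : Set Ω :=
  {u | u ∈ O ∧ dist (σ u) (g u) < infDist u K}

variable {K O : Set Ω} {σ g : Ω → E}

theorem shrunkenOpen_subset : shrunkenOpen K O σ g ⊆ O := fun _ hu => hu.1

theorem isOpen_shrunkenOpen (hO : IsOpen O) (hσ : ContinuousOn σ O) (hg : ContinuousOn g O) :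
    IsOpen (shrunkenOpen K O σ g) :=
  ((continuous_dist.comp_continuousOn (hσ.prodMk hg)).prodMk
    (continuous_infDist_pt K).continuousOn).isOpen_inter_preimage hO isOpen_lt_prod

theorem dist_lt_of_mem_shrunkenOpen {u x : Ω} (hu : u ∈ shrunkenOpen K O σ g) (hx : x ∈ K) :
    dist (σ u) (g u) < dist u x :=
  hu.2.trans_le (infDist_le_dist_of_mem hx)

theorem inter_shrunkenOpen {X : Set Ω} (hXO : IsClosed (X \ O)) (hne : (X \ O).Nonempty)
    (hagree : EqOn σ g (X ∩ O)) : X ∩ shrunkenOpen (X \ O) O σ g = X ∩ O := by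
  refine Subset.antisymm (inter_subset_inter_right X shrunkenOpen_subset) ?_
  rintro x ⟨hxX, hxO⟩
  refine ⟨hxX, hxO, ?_⟩
  rw [hagree ⟨hxX, hxO⟩, dist_self]
  exact (hXO.notMem_iff_infDist_pos hne).mp fun h => h.2 hxO

end ShrunkenOpen

section Glueing

variable {Ω E : Type*} [PseudoMetricSpace Ω] [PseudoMetricSpace E]
  {X O : Set Ω} [DecidablePred (· ∈ X)] {r : Ω → Ω} {s σ g : Ω → E}

theorem eqOn_piecewise_shrunkenOpen (hagree : EqOn σ s (X ∩ O)) :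
    EqOn (X.piecewise s σ) σ (shrunkenOpen (X \ O) O σ g) := by
  intro u hu
  by_cases huX : u ∈ X
  · rw [piecewise_eq_of_mem _ _ _ huX, hagree ⟨huX, hu.1⟩]
  · exact piecewise_eq_of_notMem _ _ _ huX

theorem tendsto_piecewise_shrunkenOpen (hrid : ∀ x ∈ X, r x = x)
    {x : Ω} (hx : x ∈ X \ O) (hsr : ContinuousAt (fun u => s (r u)) x) :
    Tendsto (X.piecewise s σ) (𝓝[X ∪ shrunkenOpen (X \ O) O σ (fun u => s (r u))] x)
      (𝓝 (s x)) := by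
  suffices hfg : ∀ u ∈ X ∪ shrunkenOpen (X \ O) O σ (fun u => s (r u)),
      dist (X.piecewise s σ u) (s (r u)) ≤ dist u x by
    simpa only [hrid x hx.1] using tendsto_nhdsWithin_of_dist_le_dist hsr hfg
  intro u hu
  by_cases huX : u ∈ X
  · rw [piecewise_eq_of_mem _ _ _ huX, hrid u huX, dist_self]
    exact dist_nonneg
  · rw [piecewise_eq_of_notMem _ _ _ huX]
    exact (dist_lt_of_mem_shrunkenOpen (hu.resolve_left huX) hx).le

end Glueing

theorem shrunken_open_set_glueing
    {Ω E : Type*} [MetricSpace Ω] [MetricSpace E]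
    (Xbar O : Set Ω) (hXbar : IsClosed Xbar) (hO : IsOpen O)
    (hne : (Xbar \ O).Nonempty)
    (r : Ω → Ω) (hr : Continuous r) (hrX : ∀ x, r x ∈ Xbar)
    (hrid : ∀ x ∈ Xbar, r x = x)
    (s σ : Ω → E) (hs : ContinuousOn s Xbar) (hσ : ContinuousOn σ O)
    (hagree : ∀ x ∈ Xbar ∩ O, σ x = s x) :
    IsOpen {u | u ∈ O ∧ dist (σ u) (s (r u)) < Metric.infDist u (Xbar \ O)} ∧
    Xbar ∩ {u | u ∈ O ∧ dist (σ u) (s (r u)) < Metric.infDist u (Xbar \ O)}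
      = Xbar ∩ O ∧
    (∀ (u : ℕ → Ω),
      (∀ n, u n ∈ O ∧ dist (σ (u n)) (s (r (u n))) < Metric.infDist (u n) (Xbar \ O)) →
      ∀ x ∈ Xbar \ O, Tendsto u atTop (𝓝 x) →
        Tendsto (fun n => σ (u n)) atTop (𝓝 (s x))) ∧
    ContinuousOn (fun x => if x ∈ Xbar then s x else σ x)
      (Xbar ∪ {u | u ∈ O ∧ dist (σ u) (s (r u)) < Metric.infDist u (Xbar \ O)}) := by
  set O' := shrunkenOpen (Xbar \ O) O σ (fun u => s (r u))
  have hsr : Continuous (fun u => s (r u)) := hs.comp_continuous hr hrX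
  have hopen : IsOpen O' := isOpen_shrunkenOpen hO hσ hsr.continuousOn
  have hinter : Xbar ∩ O' = Xbar ∩ O :=
    inter_shrunkenOpen (hXbar.sdiff hO) hne fun x hx => by rw [hagree x hx, hrid x hx.1]
  have hglue : EqOn (Xbar.piecewise s σ) σ O' := eqOn_piecewise_shrunkenOpen hagree
  refine ⟨hopen, hinter, fun u hu x hx hux => ?_, fun a ha => ?_⟩
  · have hux' : Tendsto u atTop (𝓝[Xbar ∪ O'] x) :=
      tendsto_nhdsWithin_of_tendsto_nhds_of_eventually_within _ hux
        (Eventually.of_forall fun n => Or.inr (hu n))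
    exact ((tendsto_piecewise_shrunkenOpen hrid hx hsr.continuousAt).comp hux').congr
      fun n => hglue (hu n)
  by_cases haO' : a ∈ O'
  · exact ((hσ.continuousAt (hO.mem_nhds haO'.1)).congr
      (hglue.eventuallyEq_of_mem (hopen.mem_nhds haO')).symm).continuousWithinAt
  · have haX : a ∈ Xbar := ha.resolve_right haO'
    have haO : a ∉ O := fun h => haO' (hinter.ge ⟨haX, h⟩).2
    have := tendsto_piecewise_shrunkenOpen (σ := σ) hrid ⟨haX, haO⟩ hsr.continuousAt
    rwa [← piecewise_eq_of_mem Xbar s σ haX] at this
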